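/- For NPatterns, removing k edges from a bipartite graph with n tuples yields normalized Kendall tau distance between old and new score vectors at most 2k/(n-1); hence for fixed k the distance tends to 0 as n → ∞ (stability of NPatterns under Kendall tau). -/
import Mathlib


open Finset

/-- Normalized Kendall tau distance between two `n`-dimensional real vectors. -/
noncomputable def kendallTau (n : ℕ) (w1 w2 : Fin n → ℝ) : ℝ :=
  (2 / ((n : ℝ) * ((n : ℝ) - 1))) *
    ∑ i : Fin n, ∑ j : Fin n, (if w1 i < w1 j ∧ w2 j < w2 i then (1 : ℝ) else 0)

/-- Stability of NPatterns under Kendall tau: removing `k` edges from a bipartite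
graph with `n ≥ 2` tuples yields a normalized Kendall tau distance between the old
and new in-degree score vectors of at most `2k/(n-1)`. -/
theorem npatterns_kendall_stable {P : Type*} [DecidableEq P] {n k : ℕ} (hn : 2 ≤ n)
    (G R : Finset (P × Fin n)) (hR : R ⊆ G) (hk : R.card = k) :
    kendallTau n (fun t => ((G.filter (fun e => e.2 = t)).card : ℝ))
        (fun t => (((G \ R).filter (fun e => e.2 = t)).card : ℝ)) ≤
      2 * (k : ℝ) / ((n : ℝ) - 1) := by
  classical
  set w1 : Fin n → ℝ := fun t => ((G.filter (fun e => e.2 = t)).card : ℝ) with hw1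
  set w2 : Fin n → ℝ := fun t => (((G \ R).filter (fun e => e.2 = t)).card : ℝ) with hw2
  set r : Fin n → ℕ := fun t => (R.filter (fun e => e.2 = t)).card with hrdef
  -- decomposition of degrees
  have hsplit : ∀ t, (G.filter (fun e => e.2 = t)).card
      = ((G \ R).filter (fun e => e.2 = t)).card + (R.filter (fun e => e.2 = t)).card := by
    intro t
    have hdisj : Disjoint ((G \ R).filter (fun e => e.2 = t)) (R.filter (fun e => e.2 = t)) :=
      disjoint_filter_filter sdiff_disjoint
    rw [← card_union_of_disjoint hdisj]
    congr 1
    ext e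
    have := @hR e
    simp only [mem_union, mem_filter, mem_sdiff]
    tauto
  have hw12 : ∀ t, w1 t = w2 t + (r t : ℝ) := by
    intro t
    simp only [hw1, hw2, hrdef, hsplit t, Nat.cast_add]
  have hle : ∀ t, w2 t ≤ w1 t := by
    intro t
    rw [hw12 t]
    have : (0:ℝ) ≤ (r t : ℝ) := Nat.cast_nonneg _
    linarith
  -- key pointwise bound
  have hpoint : ∀ i j : Fin n,
      (if w1 i < w1 j ∧ w2 j < w2 i then (1 : ℝ) else 0) ≤ (r j : ℝ) := by
    intro i j
    split_ifs with h
    · rcases h with ⟨h1, h2⟩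
      have : w2 j < w1 j := lt_of_lt_of_le h2 (le_trans (hle i) (le_of_lt h1))
      rw [hw12 j] at this
      have hr0 : (0:ℝ) < (r j : ℝ) := by linarith
      have : 1 ≤ r j := Nat.one_le_iff_ne_zero.mpr (by
        intro h0; rw [h0] at hr0; simp at hr0)
      exact_mod_cast this
    · exact Nat.cast_nonneg _
  -- sum of r over all tuples is k
  have hsumr : ∑ j : Fin n, (r j : ℝ) = (k : ℝ) := by
    have : ∑ j : Fin n, r j = R.card := by
      rw [card_eq_sum_card_fiberwise (f := fun e => e.2) (t := Finset.univ)
        (fun x _ => mem_univ _)]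
    rw [← Nat.cast_sum, this, hk]
  -- bound the double sum
  have hS : ∑ i : Fin n, ∑ j : Fin n, (if w1 i < w1 j ∧ w2 j < w2 i then (1 : ℝ) else 0)
      ≤ (n : ℝ) * (k : ℝ) := by
    calc ∑ i : Fin n, ∑ j : Fin n, (if w1 i < w1 j ∧ w2 j < w2 i then (1 : ℝ) else 0)
        ≤ ∑ _i : Fin n, ∑ j : Fin n, (r j : ℝ) := by
          apply Finset.sum_le_sum
          intro i _
          exact Finset.sum_le_sum fun j _ => hpoint i j
      _ = (n : ℝ) * (k : ℝ) := by
          rw [Finset.sum_const, hsumr]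
          simp [nsmul_eq_mul]
  -- finish
  have hn1 : (1:ℝ) < (n : ℝ) := by exact_mod_cast lt_of_lt_of_le one_lt_two hn
  have hnpos : (0:ℝ) < (n : ℝ) := by linarith
  have hn1pos : (0:ℝ) < (n : ℝ) - 1 := by linarith
  have hcpos : (0:ℝ) < (n : ℝ) * ((n : ℝ) - 1) := mul_pos hnpos hn1pos
  unfold kendallTau
  have hcnn : (0:ℝ) ≤ 2 / ((n : ℝ) * ((n : ℝ) - 1)) := by positivity
  calc (2 / ((n : ℝ) * ((n : ℝ) - 1))) *
        ∑ i : Fin n, ∑ j : Fin n, (if w1 i < w1 j ∧ w2 j < w2 i then (1 : ℝ) else 0)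
      ≤ (2 / ((n : ℝ) * ((n : ℝ) - 1))) * ((n : ℝ) * (k : ℝ)) :=
        mul_le_mul_of_nonneg_left hS hcnn
    _ = 2 * (k : ℝ) / ((n : ℝ) - 1) := by
        field_simp
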